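/- arXiv:1211.3881 — 2 statements merged into one kernel-verified Lean document; each statement's English description precedes it below -/
import Mathlib

section
/- Let (Ω, ℱ, P) be a probability space, Θ ⊆ ℝ an open interval, and 𝓡 a nonempty finite set. For each R ∈ 𝓡 let F_R : Θ × Ω → ℝ be measurable in ω, and let 𝐑 : Θ × Ω → 𝓡 be measurable in ω for each θ. Define F(θ,ω) = Σ_{R∈𝓡} 1_{{𝐑(θ,ω)=R}} F_R(θ,ω). Assume for each R ∈ 𝓡: (i) F_R is integrable at some point of Θ, for every θ ∈ Θ the derivative ∂F_R(θ,ω)/∂θ exists at θ for P-almost every ω, and there is λ_R : Ω → ℝ with E[λ_R] < ∞ such that |F_R(θ₁,ω) − F_R(θ₂,ω)| ≤ λ_R(ω)|θ₁ − θ₂| almost surely for all θ₁, θ₂ ∈ Θ; (ii) for every θ ∈ Θ, the pair (F_R(θ,·), ∂F_R(θ,·)/∂θ) is independent of the random element 𝐑(θ,·); (iii) for every θ ∈ Θ and R ∈ 𝓡, the function Φ(θ,R) = P{𝐑(θ,·) = R} is continuously differentiable in θ and Φ(θ,R) > 0. Then for every θ₀ ∈ Θ, the function θ ↦ E[F(θ,·)]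 is differentiable at θ₀ and its derivative equals E[G(θ₀,·)], where G(θ₀,ω) = (∂/∂θ F_{𝐑(θ₀,ω)}(θ,ω))|_{θ=θ₀} + F_{𝐑(θ₀,ω)}(θ₀,ω) · Ψ(θ₀, 𝐑(θ₀,ω)) and Ψ(θ,R) = ∂/∂θ ln Φ(θ,R). -/
open scoped Classical
open MeasureTheory ProbabilityTheory Filter Topology

/-! Independence of `F_R(θ,·)` from `𝐑(θ,·)` gives `E[F(θ,·)] = Σ_R Φ(θ,R) E[F_R(θ,·)]` on `Θ`.
Each `θ ↦ E[F_R(θ,·)]` is differentiable with derivative `E[∂F_R/∂θ]` by dominated convergence,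
the difference quotients being dominated by `λ_R`. The product rule and `∂Φ/∂θ = Φ Ψ` give the
derivative `Σ_R Φ(θ₀,R) E[∂F_R/∂θ + F_R Ψ(θ₀,R)]`, which independence turns back into
`E[G(θ₀,·)]`. -/

theorem HasDerivAt.mul_deriv_log {f : ℝ → ℝ} {f' x : ℝ} (hf : HasDerivAt f f' x) (hx : f x ≠ 0) :
    f x * _root_.deriv (fun t => Real.log (f t)) x = f' := by
  rw [(hf.log hx).deriv, mul_div_cancel₀ _ hx]

section

variable {Ω : Type*} [MeasurableSpace Ω] {μ : Measure Ω}

theorem MeasureTheory.Integrable.of_abs_sub_le {f g h : Ω → ℝ} (hg : Integrable g μ)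
    (hh : Integrable h μ) (hf : AEStronglyMeasurable f μ) (hfg : ∀ᵐ ω ∂μ, |f ω - g ω| ≤ h ω) :
    Integrable f μ := by
  simpa using (hh.mono' (hf.sub hg.aestronglyMeasurable) hfg).add hg

theorem exists_seq_mem_tendsto_nhdsNE {U : Set ℝ} {x₀ : ℝ} (hU : U ∈ 𝓝 x₀) :
    ∃ u : ℕ → ℝ, (∀ n, u n ∈ U \ {x₀}) ∧ Tendsto u atTop (𝓝[≠] x₀) := by
  obtain ⟨l, r, hx₀, hlr⟩ := mem_nhds_iff_exists_Ioo_subset.1 hU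
  obtain ⟨u, -, hu_mem, hu_lim⟩ := exists_seq_strictAnti_tendsto' hx₀.2
  refine ⟨u, fun n => ⟨hlr ⟨hx₀.1.trans (hu_mem n).1, (hu_mem n).2⟩, (hu_mem n).1.ne'⟩,
    tendsto_nhdsWithin_iff.2 ⟨hu_lim, Eventually.of_forall fun n => (hu_mem n).1.ne'⟩⟩

theorem hasDerivAt_integral_of_dominated_slope {F : ℝ → Ω → ℝ} {F' bound : Ω → ℝ} {x₀ : ℝ}
    {U : Set ℝ} (hU : U ∈ 𝓝 x₀) (hF_int : ∀ x ∈ U, Integrable (F x) μ)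
    (h_bound : ∀ x ∈ U, ∀ᵐ ω ∂μ, |F x ω - F x₀ ω| ≤ bound ω * |x - x₀|)
    (bound_integrable : Integrable bound μ)
    (h_diff : ∀ᵐ ω ∂μ, HasDerivAt (F · ω) (F' ω) x₀) :
    Integrable F' μ ∧ HasDerivAt (fun x => ∫ ω, F x ω ∂μ) (∫ ω, F' ω ∂μ) x₀ := by
  have hx₀ : x₀ ∈ U := mem_of_mem_nhds hU
  have h_lim : ∀ᵐ ω ∂μ, Tendsto (slope (F · ω) x₀) (𝓝[≠] x₀) (𝓝 (F' ω)) := by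
    filter_upwards [h_diff] with ω hω using hasDerivAt_iff_tendsto_slope.1 hω
  have h_slope_meas : ∀ x ∈ U, AEStronglyMeasurable (fun ω => slope (F · ω) x₀ x) μ :=
    fun x hx => (((hF_int x hx).sub (hF_int x₀ hx₀)).smul (x - x₀)⁻¹).aestronglyMeasurable
  have h_slope_bound : ∀ x ∈ U, x ≠ x₀ → ∀ᵐ ω ∂μ, ‖slope (F · ω) x₀ x‖ ≤ bound ω := by
    intro x hx hne
    filter_upwards [h_bound x hx] with ω hω
    rw [slope_def_field, Real.norm_eq_abs, abs_div, div_le_iff₀ (abs_pos.2 (sub_ne_zero.2 hne))]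
    exact hω
  -- `h_bound` holds almost everywhere separately for each `x`, so pointwise statements about `F'`
  -- are obtained along a sequence.
  obtain ⟨u, hu_mem, hu_lim⟩ := exists_seq_mem_tendsto_nhdsNE hU
  have hF'_meas : AEStronglyMeasurable F' μ :=
    aestronglyMeasurable_of_tendsto_ae atTop (fun n => h_slope_meas (u n) (hu_mem n).1)
      (by filter_upwards [h_lim] with ω hω using hω.comp hu_lim)
  have hF'_bound : ∀ᵐ ω ∂μ, ‖F' ω‖ ≤ bound ω := by
    filter_upwards [h_lim, ae_all_iff.2 fun n => h_slope_bound (u n) (hu_mem n).1 (hu_mem n).2]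
      with ω hω hω_bound
    exact le_of_tendsto (hω.comp hu_lim).norm (Eventually.of_forall hω_bound)
  refine ⟨bound_integrable.mono' hF'_meas hF'_bound, hasDerivAt_iff_tendsto_slope.2 ?_⟩
  have hU' : U \ {x₀} ∈ 𝓝[≠] x₀ := sdiff_mem_nhdsWithin_compl hU _
  refine (tendsto_integral_filter_of_dominated_convergence bound
    (eventually_of_mem hU' fun x hx => h_slope_meas x hx.1)
    (eventually_of_mem hU' fun x hx => h_slope_bound x hx.1 hx.2) bound_integrable h_lim).congr'
    (eventually_of_mem hU' fun x hx => ?_)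
  simp only [slope, vsub_eq_sub, integral_smul, integral_sub (hF_int x hx.1) (hF_int x₀ hx₀)]

theorem integral_ite_eq_measureReal_mul_of_indepFun {ι : Type*} [MeasurableSpace ι]
    [MeasurableSingletonClass ι] {X : Ω → ℝ} {Y : Ω → ι} (hX : Integrable X μ) (hY : Measurable Y)
    (hXY : IndepFun X Y μ) (i : ι) :
    ∫ ω, (if Y ω = i then X ω else 0) ∂μ = μ.real {ω | Y ω = i} * ∫ ω, X ω ∂μ := by
  have h_ind : Measurable (({i} : Set ι).indicator (1 : ι → ℝ)) :=
    measurable_one.indicator (measurableSet_singleton i)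
  have hYi : MeasurableSet {ω | Y ω = i} := hY (measurableSet_singleton i)
  calc ∫ ω, (if Y ω = i then X ω else 0) ∂μ
      = ∫ ω, (X * (({i} : Set ι).indicator (1 : ι → ℝ) ∘ Y)) ω ∂μ := by
        congr 1; ext ω; by_cases h : Y ω = i <;> simp [h]
    _ = (∫ ω, X ω ∂μ) * ∫ ω, ({ω | Y ω = i} : Set Ω).indicator 1 ω ∂μ :=
        (hXY.comp measurable_id h_ind).integral_mul_eq_mul_integral hX.aestronglyMeasurable
          (h_ind.comp hY).aestronglyMeasurable
    _ = μ.real {ω | Y ω = i} * ∫ ω, X ω ∂μ := by rw [integral_indicator_one hYi, mul_comm]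

theorem integral_comp_eq_sum_measureReal_mul_of_indepFun {ι : Type*} [Fintype ι]
    [MeasurableSpace ι] [MeasurableSingletonClass ι] {X : ι → Ω → ℝ} {Y : Ω → ι}
    (hX : ∀ i, Integrable (X i) μ) (hY : Measurable Y) (hXY : ∀ i, IndepFun (X i) Y μ) :
    ∫ ω, X (Y ω) ω ∂μ = ∑ i, μ.real {ω | Y ω = i} * ∫ ω, X i ω ∂μ := by
  have h_split : ∀ ω, X (Y ω) ω = ∑ i, if Y ω = i then X i ω else 0 := fun ω => by simp
  simp_rw [h_split]
  rw [integral_finsetSum _ fun i _ => ?_]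
  · exact Finset.sum_congr rfl fun i _ =>
      integral_ite_eq_measureReal_mul_of_indepFun (hX i) hY (hXY i) i
  · refine ((hX i).indicator (hY (measurableSet_singleton i))).congr (ae_of_all _ fun ω => ?_)
    simp [Set.indicator_apply]

end

theorem unbiased_gradient_estimate_general
    {Ω : Type*} [MeasurableSpace Ω] (P : Measure Ω)
    (a b : ℝ) (Θ : Set ℝ) (hΘ : Θ = Set.Ioo a b)
    (ℛ : Type*) [Fintype ℛ] [MeasurableSpace ℛ]
    [MeasurableSingletonClass ℛ]
    (F : ℛ → ℝ → Ω → ℝ) (RT : ℝ → Ω → ℛ)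
    (hFmeas : ∀ R, ∀ θ ∈ Θ, Measurable (F R θ))
    (hRTmeas : ∀ θ ∈ Θ, Measurable (RT θ))
    -- (i) integrability at some point, a.s. differentiability, Lipschitz domination
    (hFint : ∀ R, ∃ θ ∈ Θ, Integrable (F R θ) P)
    (hdiff : ∀ R, ∀ θ ∈ Θ, ∀ᵐ ω ∂P, DifferentiableAt ℝ (fun t => F R t ω) θ)
    (hLip : ∀ R, ∃ lam : Ω → ℝ, Integrable lam P ∧
      ∀ θ₁ ∈ Θ, ∀ θ₂ ∈ Θ,
        ∀ᵐ ω ∂P, |F R θ₁ ω - F R θ₂ ω| ≤ lam ω * |θ₁ - θ₂|)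
    -- (ii) independence of (F_R(θ,·), ∂F_R(θ,·)/∂θ) from RT(θ,·)
    (hindep : ∀ R, ∀ θ ∈ Θ,
      IndepFun (fun ω => (F R θ ω, deriv (fun t => F R t ω) θ)) (RT θ) P)
    -- (iii) Φ(θ,R) is continuously differentiable and positive on Θ
    (Φ : ℝ → ℛ → ℝ) (hΦ : ∀ θ R, Φ θ R = (P {ω | RT θ ω = R}).toReal)
    (hΦdiff : ∀ R, ∀ θ ∈ Θ, ContDiffAt ℝ 1 (fun t => Φ t R) θ)
    (hΦpos : ∀ R, ∀ θ ∈ Θ, 0 < Φ θ R) :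
    ∀ θ₀ ∈ Θ,
      HasDerivAt
        (fun θ => ∫ ω, ∑ R : ℛ, (if RT θ ω = R then F R θ ω else 0) ∂P)
        (∫ ω, (deriv (fun t => F (RT θ₀ ω) t ω) θ₀
            + F (RT θ₀ ω) θ₀ ω
              * deriv (fun t => Real.log (Φ t (RT θ₀ ω))) θ₀) ∂P)
        θ₀ := by
  intro θ₀ hθ₀
  have hΘ_nhds : Θ ∈ 𝓝 θ₀ := hΘ ▸ isOpen_Ioo.mem_nhds (hΘ ▸ hθ₀)
  choose lam hlam_int hlam using hLip
  have hF_int : ∀ R, ∀ θ ∈ Θ, Integrable (F R θ) P := fun R θ hθ => by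
    obtain ⟨θ₁, hθ₁, hθ₁_int⟩ := hFint R
    exact hθ₁_int.of_abs_sub_le ((hlam_int R).mul_const _) (hFmeas R θ hθ).aestronglyMeasurable
      (hlam R θ hθ θ₁ hθ₁)
  set D : ℛ → Ω → ℝ := fun R ω => deriv (fun t => F R t ω) θ₀
  have hD : ∀ R, Integrable (D R) P ∧
      HasDerivAt (fun θ => ∫ ω, F R θ ω ∂P) (∫ ω, D R ω ∂P) θ₀ := fun R =>
    hasDerivAt_integral_of_dominated_slope hΘ_nhds (hF_int R) (fun θ hθ => hlam R θ hθ θ₀ hθ₀)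
      (hlam_int R) (by filter_upwards [hdiff R θ₀ hθ₀] with ω hω using hω.hasDerivAt)
  have hΦ_deriv : ∀ R, HasDerivAt (Φ · R) (deriv (Φ · R) θ₀) θ₀ := fun R =>
    ((hΦdiff R θ₀ hθ₀).differentiableAt one_ne_zero).hasDerivAt
  have hE : ∀ θ ∈ Θ, ∫ ω, ∑ R, (if RT θ ω = R then F R θ ω else 0) ∂P
      = ∑ R, Φ θ R * ∫ ω, F R θ ω ∂P := fun θ hθ => by
    simp only [Finset.sum_ite_eq, Finset.mem_univ, if_true, hΦ, ← measureReal_def]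
    exact integral_comp_eq_sum_measureReal_mul_of_indepFun (hF_int · θ hθ) (hRTmeas θ hθ)
      fun R => (hindep R θ hθ).comp measurable_fst measurable_id
  have hG : ∫ ω, (D (RT θ₀ ω) ω
        + F (RT θ₀ ω) θ₀ ω * deriv (fun t => Real.log (Φ t (RT θ₀ ω))) θ₀) ∂P
      = ∑ R, (deriv (Φ · R) θ₀ * ∫ ω, F R θ₀ ω ∂P + Φ θ₀ R * ∫ ω, D R ω ∂P) := by
    have hX_int : ∀ R, Integrable
        (fun ω => D R ω + F R θ₀ ω * deriv (fun t => Real.log (Φ t R)) θ₀) P :=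
      fun R => (hD R).1.add ((hF_int R θ₀ hθ₀).mul_const _)
    rw [integral_comp_eq_sum_measureReal_mul_of_indepFun hX_int (hRTmeas θ₀ hθ₀)
      fun R => (hindep R θ₀ hθ₀).comp
        (φ := fun p : ℝ × ℝ => p.2 + p.1 * deriv (fun t => Real.log (Φ t R)) θ₀) (by fun_prop)
        measurable_id]
    refine Finset.sum_congr rfl fun R _ => ?_
    rw [integral_add (hD R).1 ((hF_int R θ₀ hθ₀).mul_const _), integral_mul_const, measureReal_def,
      ← hΦ, ← (hΦ_deriv R).mul_deriv_log (hΦpos R θ₀ hθ₀).ne']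
    ring
  rw [hG]
  exact (HasDerivAt.fun_sum fun R _ => (hΦ_deriv R).mul (hD R).2).congr_of_eventuallyEq
    (eventually_of_mem hΘ_nhds hE)

/-- **Theorem 2 (unbiased score-function-corrected gradient estimate).**
`Θ = (a,b)` is an open interval, `ℛ` a nonempty finite set (of routing tables),
`F R` the performance criterion under the fixed routing table `R`, `RT θ` the random
routing table, `F(θ,ω) = Σ_R 1_{RT(θ,ω)=R} F_R(θ,ω)`.  Under (i) the Lipschitz
dominated-differentiability conditions on each `F_R`, (ii) independence of
`(F_R(θ,·), ∂F_R(θ,·)/∂θ)` from `RT(θ,·)`, and (iii) positivity and continuous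
differentiability of `Φ(θ,R) = P{RT(θ,·)=R}`, the map `θ ↦ E[F(θ,·)]` is differentiable
at every `θ₀ ∈ Θ` with derivative `E[G(θ₀,·)]`, where
`G(θ₀,ω) = ∂F_{RT(θ₀,ω)}(θ₀,ω)/∂θ + F_{RT(θ₀,ω)}(θ₀,ω) · ∂(ln Φ(θ,RT(θ₀,ω)))/∂θ|_{θ₀}`. -/
theorem unbiased_gradient_estimate
    {Ω : Type*} [MeasurableSpace Ω] (P : Measure Ω) [IsProbabilityMeasure P]
    (a b : ℝ) (Θ : Set ℝ) (hΘ : Θ = Set.Ioo a b)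
    (ℛ : Type*) [Fintype ℛ] [Nonempty ℛ] [MeasurableSpace ℛ]
    [MeasurableSingletonClass ℛ]
    (F : ℛ → ℝ → Ω → ℝ) (RT : ℝ → Ω → ℛ)
    (hFmeas : ∀ R, ∀ θ ∈ Θ, Measurable (F R θ))
    (hRTmeas : ∀ θ ∈ Θ, Measurable (RT θ))
    -- (i) integrability at some point, a.s. differentiability, Lipschitz domination
    (hFint : ∀ R, ∃ θ ∈ Θ, Integrable (F R θ) P)
    (hdiff : ∀ R, ∀ θ ∈ Θ, ∀ᵐ ω ∂P, DifferentiableAt ℝ (fun t => F R t ω) θ)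
    (hLip : ∀ R, ∃ lam : Ω → ℝ, Integrable lam P ∧
      ∀ θ₁ ∈ Θ, ∀ θ₂ ∈ Θ,
        ∀ᵐ ω ∂P, |F R θ₁ ω - F R θ₂ ω| ≤ lam ω * |θ₁ - θ₂|)
    -- (ii) independence of (F_R(θ,·), ∂F_R(θ,·)/∂θ) from RT(θ,·)
    (hindep : ∀ R, ∀ θ ∈ Θ,
      IndepFun (fun ω => (F R θ ω, deriv (fun t => F R t ω) θ)) (RT θ) P)
    -- (iii) Φ(θ,R) is continuously differentiable and positive on Θ
    (Φ : ℝ → ℛ → ℝ) (hΦ : ∀ θ R, Φ θ R = (P {ω | RT θ ω = R}).toReal)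
    (hΦdiff : ∀ R, ∀ θ ∈ Θ, ContDiffAt ℝ 1 (fun t => Φ t R) θ)
    (hΦpos : ∀ R, ∀ θ ∈ Θ, 0 < Φ θ R) :
    ∀ θ₀ ∈ Θ,
      HasDerivAt
        (fun θ => ∫ ω, ∑ R : ℛ, (if RT θ ω = R then F R θ ω else 0) ∂P)
        (∫ ω, (deriv (fun t => F (RT θ₀ ω) t ω) θ₀
            + F (RT θ₀ ω) θ₀ ω
              * deriv (fun t => Real.log (Φ t (RT θ₀ ω))) θ₀) ∂P)
        θ₀ :=
  unbiased_gradient_estimate_general P a b Θ hΘ ℛ F RT hFmeas hRTmeas hFint hdiff hLip hindep Φ hΦ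
    hΦdiff hΦpos
end

section
/- Let Ω = [0,1] × [0,1] with the Lebesgue product probability measure, and for θ ∈ [0,1], ω = (ω₁, ω₂) ∈ Ω define F(θ,ω) = θ + ω₁ + 1 if ω₂ ≤ θ and F(θ,ω) = θ + ω₁ if ω₂ > θ. Then there exists no measurable function λ : Ω → [0,∞) with E[λ] < ∞ such that for all θ₁, θ₂ ∈ [0,1] one has |F(θ₁,ω) − F(θ₂,ω)| ≤ λ(ω)|θ₁ − θ₂| for almost every ω. In particular, for any θ₁, θ₂ ∈ [0,1] with θ₂ < ω₂ ≤ θ₁ it holds |F(θ₁,ω) − F(θ₂,ω)| ≥ 1. -/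
/-!
Crossing the threshold `θ = ω₂` makes `F(·, ω)` jump by `1`, so a Lipschitz bound `λ(ω)` must
satisfy `1 ≤ λ(ω) (θ₁ - θ₂)` whenever `θ₂ < ω₂ ≤ θ₁`. Testing on the countably many pairs
`((k - 1)/n, k/n)` of the grid of mesh `1/n`, one of which brackets `ω₂`, gives `n ≤ λ(ω)` for
every `n`, for almost every `ω` with `ω₂ ∈ (0, 1]`; these `ω` form a set of positive measure,
which is impossible for a real-valued `λ`.
-/

open MeasureTheory

/-- The Lebesgue probability measure on the unit square `[0,1] × [0,1]`. -/
noncomputable def unitSquare : Measure (ℝ × ℝ) :=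
  (volume.restrict (Set.Icc (0 : ℝ) 1)).prod (volume.restrict (Set.Icc (0 : ℝ) 1))

/-- The performance criterion of the paper's routing example:
`F(θ,ω) = θ + ω₁ + 1` if `ω₂ ≤ θ`, and `F(θ,ω) = θ + ω₁` if `ω₂ > θ`. -/
noncomputable def Fex (θ : ℝ) (ω : ℝ × ℝ) : ℝ :=
  if ω.2 ≤ θ then θ + ω.1 + 1 else θ + ω.1

open Set Filter

lemma Fex_sub_Fex_of_lt_of_le {θ₁ θ₂ : ℝ} {ω : ℝ × ℝ} (h₂ : θ₂ < ω.2) (h₁ : ω.2 ≤ θ₁) :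
    Fex θ₁ ω - Fex θ₂ ω = θ₁ - θ₂ + 1 := by
  rw [Fex, Fex, if_pos h₁, if_neg (not_le.mpr h₂)]
  ring

lemma one_le_abs_Fex_sub_Fex {θ₁ θ₂ : ℝ} {ω : ℝ × ℝ} (h₂ : θ₂ < ω.2) (h₁ : ω.2 ≤ θ₁) :
    1 ≤ |Fex θ₁ ω - Fex θ₂ ω| := by
  rw [Fex_sub_Fex_of_lt_of_le h₂ h₁, abs_of_nonneg (by linarith)]
  linarith

lemma one_le_mul_sub_of_abs_Fex_sub_Fex_le {L θ₁ θ₂ : ℝ} {ω : ℝ × ℝ}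
    (hL : |Fex θ₁ ω - Fex θ₂ ω| ≤ L * |θ₁ - θ₂|) (h₂ : θ₂ < ω.2) (h₁ : ω.2 ≤ θ₁) :
    1 ≤ L * (θ₁ - θ₂) := by
  rw [← abs_of_nonneg (sub_nonneg.2 (h₂.trans_le h₁).le)]
  exact (one_le_abs_Fex_sub_Fex h₂ h₁).trans hL

lemma exists_mem_Ioc_grid {x : ℝ} (hx : x ∈ Ioc 0 1) {n : ℕ} (hn : 0 < n) :
    ∃ k : ℕ, 1 ≤ k ∧ k ≤ n ∧ x ∈ Ioc (((k : ℝ) - 1) / n) (k / n) := by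
  have hn' : (0 : ℝ) < n := by exact_mod_cast hn
  have hnx : 0 < (n : ℝ) * x := mul_pos hn' hx.1
  refine ⟨⌈(n : ℝ) * x⌉₊, Nat.ceil_pos.2 hnx, Nat.ceil_le.2 ?_, ?_, ?_⟩
  · exact mul_le_of_le_one_right hn'.le hx.2
  · rw [div_lt_iff₀ hn', sub_lt_iff_lt_add, mul_comm]
    exact Nat.ceil_lt_add_one (mul_nonneg hx.1.le hn'.le)
  · rw [le_div_iff₀ hn', mul_comm]
    exact Nat.le_ceil _

lemma natCast_div_mem_Icc {k n : ℕ} (hkn : k ≤ n) : (k : ℝ) / n ∈ Icc (0 : ℝ) 1 :=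
  ⟨by positivity, div_le_one_of_le₀ (by exact_mod_cast hkn) n.cast_nonneg⟩

lemma natCast_sub_one_div_mem_Icc {k n : ℕ} (hk : 1 ≤ k) (hkn : k ≤ n) :
    ((k : ℝ) - 1) / n ∈ Icc (0 : ℝ) 1 := by
  have hk' : (1 : ℝ) ≤ k := by exact_mod_cast hk
  have hkn' : (k : ℝ) ≤ n := by exact_mod_cast hkn
  exact ⟨div_nonneg (by linarith) n.cast_nonneg, div_le_one_of_le₀ (by linarith) n.cast_nonneg⟩

theorem not_forall_ae_abs_Fex_sub_Fex_le {μ : Measure (ℝ × ℝ)}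
    (hμ : μ (Prod.snd ⁻¹' Ioc 0 1) ≠ 0) (L : ℝ × ℝ → ℝ) :
    ¬ ∀ θ₁ ∈ Icc (0 : ℝ) 1, ∀ θ₂ ∈ Icc (0 : ℝ) 1,
        ∀ᵐ ω ∂μ, |Fex θ₁ ω - Fex θ₂ ω| ≤ L ω * |θ₁ - θ₂| := by
  intro hL
  have grid : ∀ᵐ ω ∂μ, ∀ n k : ℕ, 1 ≤ k → k ≤ n →
      |Fex ((k : ℝ) / n) ω - Fex (((k : ℝ) - 1) / n) ω| ≤
        L ω * |(k : ℝ) / n - ((k : ℝ) - 1) / n| :=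
    ae_all_iff.2 fun n => ae_all_iff.2 fun k =>
      eventually_imp_distrib_left.2 fun hk => eventually_imp_distrib_left.2 fun hkn =>
        hL _ (natCast_div_mem_Icc hkn) _ (natCast_sub_one_div_mem_Icc hk hkn)
  obtain ⟨ω, hω, hgrid⟩ := Measure.exists_mem_of_measure_ne_zero_of_ae hμ (ae_restrict_of_ae grid)
  set n := ⌈L ω⌉₊ + 1
  have hn : (0 : ℝ) < n := by positivity
  have hLn : L ω < n := by
    calc L ω ≤ ⌈L ω⌉₊ := Nat.le_ceil _
      _ < n := by exact_mod_cast Nat.lt_succ_self _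
  obtain ⟨k, hk, hkn, hlo, hhi⟩ := exists_mem_Ioc_grid hω (Nat.succ_pos _)
  have hjump := one_le_mul_sub_of_abs_Fex_sub_Fex_le (hgrid n k hk hkn) hlo hhi
  rw [← sub_div, sub_sub_cancel, mul_one_div, le_div_iff₀ hn, one_mul] at hjump
  exact hLn.not_ge hjump

lemma unitSquare_snd_preimage_Ioc : unitSquare (Prod.snd ⁻¹' Ioc 0 1) = 1 := by
  rw [unitSquare, ← univ_prod, Measure.prod_prod, Measure.restrict_apply_univ,
    Measure.restrict_apply measurableSet_Ioc, inter_eq_self_of_subset_left Ioc_subset_Icc_self,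
    Real.volume_Ioc, Real.volume_Icc]
  simp

/-- **Failure of the Lipschitz-domination hypothesis.**  There is no integrable
nonnegative random variable `λ` such that `|F(θ₁,ω) − F(θ₂,ω)| ≤ λ(ω)|θ₁ − θ₂|`
almost surely for all `θ₁, θ₂ ∈ [0,1]`.  In particular, whenever
`θ₂ < ω₂ ≤ θ₁` one has `|F(θ₁,ω) − F(θ₂,ω)| ≥ 1`. -/
theorem lipschitz_domination_fails :
    (¬ ∃ lam : ℝ × ℝ → ℝ, Measurable lam ∧ (∀ ω, 0 ≤ lam ω) ∧
        Integrable lam unitSquare ∧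
        ∀ θ₁ ∈ Set.Icc (0 : ℝ) 1, ∀ θ₂ ∈ Set.Icc (0 : ℝ) 1,
          ∀ᵐ ω ∂unitSquare, |Fex θ₁ ω - Fex θ₂ ω| ≤ lam ω * |θ₁ - θ₂|) ∧
    (∀ θ₁ ∈ Set.Icc (0 : ℝ) 1, ∀ θ₂ ∈ Set.Icc (0 : ℝ) 1, ∀ ω : ℝ × ℝ,
      θ₂ < ω.2 → ω.2 ≤ θ₁ → 1 ≤ |Fex θ₁ ω - Fex θ₂ ω|) := by
  refine ⟨?_, fun _ _ _ _ _ h₂ h₁ => one_le_abs_Fex_sub_Fex h₂ h₁⟩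
  rintro ⟨lam, -, -, -, hLip⟩
  exact not_forall_ae_abs_Fex_sub_Fex_le (unitSquare_snd_preimage_Ioc ▸ one_ne_zero) lam hLip
end
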